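/- E¹₁ positively fails to reduce to A¹₁: for every continuous F : (List ℕ → ℕ) → (List ℕ → ℕ) such that F maps every element of E¹₁ into A¹₁, there exists α such that both α and F α belong to A¹₁. -/

import Mathlib

/-- The initial segment `[β 0, …, β (n-1)]` of an infinite sequence `β`. -/
def seg (β : ℕ → ℕ) (n : ℕ) : List ℕ := (List.range n).map β

/-- The set of ill-founded tree codes. -/
def E11 : Set (List ℕ → ℕ) := {γ | ∃ β : ℕ → ℕ, ∀ n, γ (seg β n) = 0}

/-- The set of well-founded tree codes. -/
def A11 : Set (List ℕ → ℕ) := {γ | ∀ β : ℕ → ℕ, ∃ n, γ (seg β n) ≠ 0}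

/-!
Suppose `F α ∉ A¹₁` for every `α ∈ A¹₁`. Let `T` be the tree of finite sequences of pairs
`(a j, b j)` for which some `α` takes the value `a j` on the `j`-th list, `F α` vanishes along
`b`, and `α` vanishes on the proper prefixes of the node itself. Along an infinite branch these
`α` converge, and by continuity of `F` the limit lies in `E¹₁` (witnessed by the branch) while
`F` of it is not in `A¹₁`; so `T` is well-founded and its code `α₀` lies in `A¹₁`. If `F α₀`
vanishes along `β`, then `j ↦ ⟨α₀ (j-th list), β j⟩` is a branch of `T`, with `α₀` itself as
the witness at every level (by induction on the level); hence `α₀ ∈ E¹₁`, which is absurd.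
-/

open Filter Topology

@[simp] lemma length_seg (β : ℕ → ℕ) (n : ℕ) : (seg β n).length = n := by simp [seg]

@[simp] lemma getElem_seg (β : ℕ → ℕ) {n j : ℕ} (hj : j < (seg β n).length) :
    (seg β n)[j] = β j := by simp [seg]

lemma take_seg (β : ℕ → ℕ) {i n : ℕ} (hi : i ≤ n) : (seg β n).take i = seg β i := by
  rw [seg, ← List.map_take, List.take_range, Nat.min_eq_left hi]; rfl

lemma map_seg (f β : ℕ → ℕ) (n : ℕ) : (seg β n).map f = seg (f ∘ β) n := by
  simp [seg]

lemma compl_A11 : A11ᶜ = E11 := by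
  ext γ; simp [A11, E11]

/-- The entries of `l` are the pairs `(a j, b j)` through `Nat.unpair`. -/
def IsApprox (F : (List ℕ → ℕ) → (List ℕ → ℕ)) (l : List ℕ) : Prop :=
  ∃ α : List ℕ → ℕ,
    (∀ j (hj : j < l.length), α (Denumerable.ofNat (List ℕ) j) = l[j].unpair.1) ∧
    (∀ i ≤ l.length, F α ((l.take i).map fun m => m.unpair.2) = 0) ∧
    (∀ i < l.length, α (l.take i) = 0)

open Classical in
noncomputable def approxCode (F : (List ℕ → ℕ) → (List ℕ → ℕ)) : List ℕ → ℕ :=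
  fun l => if IsApprox F l then 0 else 1

lemma exists_not_isApprox_seg {F : (List ℕ → ℕ) → (List ℕ → ℕ)} (hF : Continuous F)
    (hmaps : ∀ γ ∈ E11, F γ ∈ A11) (β : ℕ → ℕ) : ∃ n, ¬ IsApprox F (seg β n) := by
  by_contra! hβ
  choose α hval hFα hα using hβ
  set α' : List ℕ → ℕ := fun t => (β (Encodable.encode t)).unpair.1
  have hlim : Tendsto α atTop (𝓝 α') := by
    refine tendsto_pi_nhds.2 fun t => tendsto_const_nhds.congr' ?_
    filter_upwards [eventually_gt_atTop (Encodable.encode t)] with n hn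
    have h := hval n _ (by simpa using hn)
    simp only [Denumerable.ofNat_encode, getElem_seg] at h
    exact h.symm
  have hα'E : α' ∈ E11 := ⟨β, fun k => by
    refine tendsto_nhds_unique_of_eventuallyEq ((continuous_apply _).tendsto _ |>.comp hlim)
      tendsto_const_nhds ?_
    filter_upwards [eventually_gt_atTop k] with n hn
    simpa [take_seg β hn.le] using hα n k (by simpa using hn)⟩
  obtain ⟨i, hi⟩ := hmaps α' hα'E fun j => (β j).unpair.2
  refine hi (tendsto_nhds_unique_of_eventuallyEq
    ((continuous_apply _).comp hF |>.tendsto _ |>.comp hlim) tendsto_const_nhds ?_)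
  filter_upwards [eventually_ge_atTop i] with n hn
  simpa [take_seg β hn, map_seg, Function.comp_def] using hFα n i (by simpa using hn)

lemma approxCode_mem_A11 {F : (List ℕ → ℕ) → (List ℕ → ℕ)} (hF : Continuous F)
    (hmaps : ∀ γ ∈ E11, F γ ∈ A11) : approxCode F ∈ A11 := fun β => by
  obtain ⟨n, hn⟩ := exists_not_isApprox_seg hF hmaps β
  exact ⟨n, by simp [approxCode, hn]⟩

lemma approxCode_mem_E11 (F : (List ℕ → ℕ) → (List ℕ → ℕ)) {β : ℕ → ℕ}
    (hβ : ∀ n, F (approxCode F) (seg β n) = 0) : approxCode F ∈ E11 := by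
  set branch : ℕ → ℕ := fun j => Nat.pair (approxCode F (Denumerable.ofNat (List ℕ) j)) (β j)
  refine ⟨branch, fun n => ?_⟩
  induction n using Nat.strong_induction_on with
  | _ n ih =>
    have hnode : IsApprox F (seg branch n) := by
      refine ⟨approxCode F, fun j hj => by simp [branch], fun i hi => ?_, fun i hi => ?_⟩
      · rw [length_seg] at hi
        simpa [take_seg branch hi, map_seg, branch, Function.comp_def] using hβ i
      · rw [length_seg] at hi
        simpa [take_seg branch hi.le] using ih i hi
    simp [approxCode, hnode]

/-- `E¹₁` positively fails to reduce to `A¹₁`: every continuous function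
mapping `E¹₁` into `A¹₁` maps some element of `A¹₁` into `A¹₁`. -/
theorem E11_positively_fails_to_reduce_to_A11
    (F : (List ℕ → ℕ) → (List ℕ → ℕ)) (hF : Continuous F)
    (hmaps : ∀ γ ∈ E11, F γ ∈ A11) :
    ∃ α, α ∈ A11 ∧ F α ∈ A11 := by
  have hA := approxCode_mem_A11 hF hmaps
  refine ⟨approxCode F, hA, ?_⟩
  by_contra hFA
  rw [← Set.mem_compl_iff, compl_A11] at hFA
  obtain ⟨β, hβ⟩ := hFA
  have hE := approxCode_mem_E11 F hβ
  rw [← compl_A11] at hE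
  exact hE hA
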